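/- Let V be a finite set with N := |V| divisible by 4, and let b, c, b', c' : ZMod 4 → ZMod 2. Put β(i) := b(i) + b'(i) and γ(i) := c(i) + c'(i). If β(0) = 0, β(2) = 0, β(1) + β(3) = 0, γ(0) = 0, γ(2) = 0, and γ(1) + γ(3) = 0, then there exists a bijection t̂ : A_b → A_{b'} such that t̂ maps the fiber {(U, φ) : φ ∈ L_b(U)} onto the fiber {(U, ψ) : ψ ∈ L_{b'}(U)} for every U ⊆ V, and for all l, l₁ ∈ A_b, (l, l₁) ∈ T_c if and only if (t̂(l), t̂(l₁)) ∈ T_{c'}; in particular t̂ induces an isomorphism of the corresponding orthoalgebras. -/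

import Mathlib

/-! Each `φ ∈ L_b(U)` is shifted by a constant `ε(U) ∈ ZMod 2` depending only on the parity of
`|U|`. The hypotheses say that `β(n) = n β(1)` and `γ(n) = n γ(1)` in `ZMod 2` for every `n`.
Hence the shift maps `L_b(U)` onto `L_{b'}(U)` once `|U| ε(U) = |U| β(1)`, and turns `T_c` into
`T_{c'}` once `|U ∆ U₁| (ε(U) + ε(U₁)) = |U ∆ U₁| γ(1)`. As `|U ∆ U₁| ≡ |U| + |U₁| (mod 2)`,
`ε(U) = β(1) + (|U| + 1) γ(1)` satisfies both. -/

open scoped symmDiff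

/-- `T_S(U) := U` if `|U ∩ S|` is even, and `T_S(U) := V ∖ (U Δ S)` if `|U ∩ S|` is odd. -/
def TSmap {V : Type*} [Fintype V] [DecidableEq V] (S U : Finset V) : Finset V :=
  if Even (U ∩ S).card then U else (U ∆ S)ᶜ

/-- `L_b(U) := {φ : V → ZMod 2 | ∑_{z ∈ U} φ z = b(|U| mod 4)}`. -/
def Lb {V : Type*} [DecidableEq V] (b : ZMod 4 → ZMod 2) (U : Finset V) :
    Set (V → ZMod 2) :=
  {φ | ∑ z ∈ U, φ z = b (U.card : ZMod 4)}

/-- `A_b`: the disjoint union over `U ⊆ V` of the sets `L_b(U)`,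
realized as the set of pairs `(U, φ)` with `φ ∈ L_b(U)`. -/
def AbGround (V : Type*) [DecidableEq V] (b : ZMod 4 → ZMod 2) : Type _ :=
  {p : Finset V × (V → ZMod 2) // p.2 ∈ Lb b p.1}

/-- The relation `T_c` on pairs `(U, φ)`: for equal first components it is `φ ≠ φ'`,
and for `U ≠ U₁` it is `∑_{z ∈ U Δ U₁} (φ z + φ₁ z) ≠ c(|U Δ U₁| mod 4)`. -/
def TcP {V : Type*} [DecidableEq V] (c : ZMod 4 → ZMod 2)
    (p q : Finset V × (V → ZMod 2)) : Prop :=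
  if p.1 = q.1 then p.2 ≠ q.2
  else ∑ z ∈ p.1 ∆ q.1, (p.2 z + q.2 z) ≠ c (((p.1 ∆ q.1).card : ZMod 4))

/-- The relation `T_c` on `A_b`. -/
def Tc {V : Type*} [DecidableEq V] (b : ZMod 4 → ZMod 2) (c : ZMod 4 → ZMod 2)
    (l l₁ : AbGround V b) : Prop :=
  TcP c l.1 l₁.1

open Finset

namespace Finset

variable {α : Type*} [DecidableEq α]

theorem card_symmDiff_add_two_mul_card_inter (s t : Finset α) :
    #(s ∆ t) + 2 * #(s ∩ t) = #s + #t := by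
  rw [symmDiff_eq_sup_sdiff_inf, sup_eq_union, inf_eq_inter,
    card_sdiff_of_subset inter_subset_union, ← card_union_add_card_inter]
  have := card_le_card (inter_subset_union (s := s) (t := t))
  omega

theorem natCast_card_symmDiff {R : Type*} [Semiring R] [CharP R 2] (s t : Finset α) :
    (#(s ∆ t) : R) = #s + #t := by
  rw [← Nat.cast_add, ← card_symmDiff_add_two_mul_card_inter, Nat.cast_add, Nat.cast_mul,
    Nat.cast_ofNat, CharTwo.two_eq_zero, zero_mul, add_zero]

end Finset

theorem apply_natCast_eq_natCast_mul_apply_one {β : ZMod 4 → ZMod 2} (h0 : β 0 = 0)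
    (h2 : β 2 = 0) (h13 : β 1 + β 3 = 0) (n : ℕ) : β n = (n : ZMod 2) * β 1 := by
  have h3 : β 3 = β 1 := (CharTwo.add_eq_zero.mp h13).symm
  have key (k : ZMod 4) : β k = (k.cast : ZMod 2) * β 1 := by
    fin_cases k
    · show β 0 = ZMod.cast (0 : ZMod 4) * β 1
      rw [h0, ZMod.cast_zero, zero_mul]
    · show β 1 = ZMod.cast (1 : ZMod 4) * β 1
      rw [show (ZMod.cast (1 : ZMod 4) : ZMod 2) = 1 by decide, one_mul]
    · show β 2 = ZMod.cast (2 : ZMod 4) * β 1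
      rw [h2, show (ZMod.cast (2 : ZMod 4) : ZMod 2) = 0 by decide, zero_mul]
    · show β 3 = ZMod.cast (3 : ZMod 4) * β 1
      rw [h3, show (ZMod.cast (3 : ZMod 4) : ZMod 2) = 1 by decide, one_mul]
  rw [key, ZMod.cast_natCast (by norm_num)]

theorem apply_add_natCast_mul_eq {b b' : ZMod 4 → ZMod 2} (h0 : b 0 + b' 0 = 0)
    (h2 : b 2 + b' 2 = 0) (h13 : (b 1 + b' 1) + (b 3 + b' 3) = 0) (n : ℕ) :
    b n + n * (b 1 + b' 1) = b' n := by
  rw [← CharTwo.add_cancel_left (b n) (b' n)]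
  exact congrArg (b n + ·) (apply_natCast_eq_natCast_mul_apply_one (β := b + b') h0 h2 h13 n).symm

section Shift

variable {V : Type*} (s : Finset V → ZMod 2)

def shiftPair (p : Finset V × (V → ZMod 2)) : Finset V × (V → ZMod 2) :=
  (p.1, p.2 + fun _ => s p.1)

theorem shiftPair_shiftPair (p : Finset V × (V → ZMod 2)) : shiftPair s (shiftPair s p) = p :=
  Prod.ext rfl (funext fun _ => CharTwo.add_cancel_right _ _)

variable [DecidableEq V] {b b' : ZMod 4 → ZMod 2}

theorem shiftPair_mem_Lb (hs : ∀ U : Finset V, b #U + #U * s U = b' #U)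
    {p : Finset V × (V → ZMod 2)} (hp : p.2 ∈ Lb b p.1) : (shiftPair s p).2 ∈ Lb b' p.1 := by
  change ∑ z ∈ p.1, p.2 z = b #p.1 at hp
  change ∑ z ∈ p.1, (p.2 z + s p.1) = b' #p.1
  rw [sum_add_distrib, sum_const, nsmul_eq_mul, hp, hs]

def AbGround.shiftEquiv (hs : ∀ U : Finset V, b #U + #U * s U = b' #U) :
    AbGround V b ≃ AbGround V b' where
  toFun l := ⟨shiftPair s l.1, shiftPair_mem_Lb s hs l.2⟩
  invFun l := ⟨shiftPair s l.1, shiftPair_mem_Lb s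
    (fun U => by rw [← hs, CharTwo.add_cancel_right]) l.2⟩
  left_inv l := Subtype.ext (shiftPair_shiftPair s l.1)
  right_inv l := Subtype.ext (shiftPair_shiftPair s l.1)

theorem TcP_shiftPair_iff {c c' : ZMod 4 → ZMod 2}
    (hc : ∀ U U₁ : Finset V, c #(U ∆ U₁) + #(U ∆ U₁) * (s U + s U₁) = c' #(U ∆ U₁))
    (p q : Finset V × (V → ZMod 2)) : TcP c' (shiftPair s p) (shiftPair s q) ↔ TcP c p q := by
  obtain ⟨U, φ⟩ := p
  obtain ⟨U₁, φ₁⟩ := q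
  dsimp only [TcP, shiftPair, Pi.add_apply]
  split_ifs with hU
  · subst hU
    exact (add_left_injective _).ne_iff
  · have hsum : ∑ z ∈ U ∆ U₁, (φ z + s U + (φ₁ z + s U₁))
        = ∑ z ∈ U ∆ U₁, (φ z + φ₁ z) + #(U ∆ U₁) * (s U + s U₁) := by
      rw [← nsmul_eq_mul, ← sum_const, ← sum_add_distrib]
      exact sum_congr rfl fun _ _ => by ring
    rw [hsum, ← hc]
    exact not_congr (add_left_inj _)

end Shift

theorem stmt16_general {V : Type*} [DecidableEq V]
    (b c b' c' : ZMod 4 → ZMod 2)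
    (hβ0 : b 0 + b' 0 = 0) (hβ2 : b 2 + b' 2 = 0)
    (hβ13 : (b 1 + b' 1) + (b 3 + b' 3) = 0)
    (hγ0 : c 0 + c' 0 = 0) (hγ2 : c 2 + c' 2 = 0)
    (hγ13 : (c 1 + c' 1) + (c 3 + c' 3) = 0) :
    ∃ t : AbGround V b ≃ AbGround V b',
      (∀ l : AbGround V b, (t l).1.1 = l.1.1) ∧
      (∀ l l₁ : AbGround V b, Tc b c l l₁ ↔ Tc b' c' (t l) (t l₁)) := by
  let s : Finset V → ZMod 2 := fun U => (b 1 + b' 1) + (#U + 1) * (c 1 + c' 1)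
  have hs (U : Finset V) : b #U + #U * s U = b' #U := by
    have key : ∀ x y z : ZMod 2, x * (y + (x + 1) * z) = x * y := by decide
    rw [key, apply_add_natCast_mul_eq hβ0 hβ2 hβ13]
  have hc (U U₁ : Finset V) : c #(U ∆ U₁) + #(U ∆ U₁) * (s U + s U₁) = c' #(U ∆ U₁) := by
    have key : ∀ x y β γ : ZMod 2,
        (x + y) * (β + (x + 1) * γ + (β + (y + 1) * γ)) = (x + y) * γ := by decide
    rw [← apply_add_natCast_mul_eq hγ0 hγ2 hγ13, natCast_card_symmDiff (R := ZMod 2), key]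
  exact ⟨AbGround.shiftEquiv s hs, fun _ => rfl,
    fun l l₁ => (TcP_shiftPair_iff s hc l.1 l₁.1).symm⟩

theorem stmt16 {V : Type*} [Fintype V] [DecidableEq V]
    (h4 : 4 ∣ Fintype.card V) (b c b' c' : ZMod 4 → ZMod 2)
    (hβ0 : b 0 + b' 0 = 0) (hβ2 : b 2 + b' 2 = 0)
    (hβ13 : (b 1 + b' 1) + (b 3 + b' 3) = 0)
    (hγ0 : c 0 + c' 0 = 0) (hγ2 : c 2 + c' 2 = 0)
    (hγ13 : (c 1 + c' 1) + (c 3 + c' 3) = 0) :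
    ∃ t : AbGround V b ≃ AbGround V b',
      (∀ l : AbGround V b, (t l).1.1 = l.1.1) ∧
      (∀ l l₁ : AbGround V b, Tc b c l l₁ ↔ Tc b' c' (t l) (t l₁)) :=
  stmt16_general b c b' c' hβ0 hβ2 hβ13 hγ0 hγ2 hγ13
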